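/- arXiv:2202.00313 — 2 statements merged into one kernel-verified Lean document; each statement's English description precedes it below -/
import Mathlib

section
/- Let q₁,…,q_d ∈ ℚ^d be vectors that are linearly independent over ℝ, and let 0 < a_i < b_i for every i = 1,…,d. Then the set {ν ∈ ℤ^d : ⟨ν, λq_i⟩ ∉ ℤ for every λ ∈ (a_i,b_i)∩ℚ and every i ∈ {1,…,d}} is finite. -/
open Function Set Filter Topology MeasureTheory

noncomputable section

/-- `ℝ^d` with the Euclidean structure. -/
abbrev Ed (d : ℕ) := EuclideanSpace ℝ (Fin d)
/-- `ℂ^d`. -/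
abbrev Cd (d : ℕ) := EuclideanSpace ℂ (Fin d)

variable {d : ℕ}

/-- The real vector associated with an integer vector `m ∈ ℤ^d`. -/
def intVec (d : ℕ) (m : Fin d → ℤ) : Ed d := WithLp.toLp 2 (fun i => (m i : ℝ))

/-- The complex vector associated with an integer vector `m ∈ ℤ^d`. -/
def intVecC (d : ℕ) (m : Fin d → ℤ) : Cd d := WithLp.toLp 2 (fun i => (m i : ℂ))

/-- The canonical embedding `ℝ^d → ℂ^d`. -/
def complexify (q : Ed d) : Cd d := WithLp.toLp 2 (fun i => (q i : ℂ))

/-- The standard pairing `⟨p, v⟩ = ∑ i, p i * v i` on `ℝ^d`. -/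
def pairing (p v : Ed d) : ℝ := ∑ i, p i * v i

/-- The standard bilinear pairing on `ℂ^d`. -/
def pairingC (p v : Cd d) : ℂ := ∑ i, p i * v i

/-- `g` is a `C¹` diffeomorphism. -/
def IsC1Diffeo {X Y : Type*} [NormedAddCommGroup X] [NormedSpace ℝ X]
    [NormedAddCommGroup Y] [NormedSpace ℝ Y] (g : X → Y) : Prop :=
  ContDiff ℝ 1 g ∧ ∃ ginv : Y → X, ContDiff ℝ 1 ginv ∧
    Function.LeftInverse ginv g ∧ Function.RightInverse ginv g

/-- `g` is a holomorphic diffeomorphism. -/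
def IsHolDiffeo {X Y : Type*} [NormedAddCommGroup X] [NormedSpace ℂ X]
    [NormedAddCommGroup Y] [NormedSpace ℂ Y] (g : X → Y) : Prop :=
  Differentiable ℂ g ∧ ∃ ginv : Y → X, Differentiable ℂ ginv ∧
    Function.LeftInverse ginv g ∧ Function.RightInverse ginv g

/-- `F(q+m, p) = F(q, p) + (m, 0)` for all `m ∈ ℤ^d`: `F` is the lift of a map of
`𝕋^d × ℝ^d`. -/
def IsZdLift (F : Ed d × Ed d → Ed d × Ed d) : Prop :=
  ∀ (m : Fin d → ℤ) (q p : Ed d),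
    F (q + intVec d m, p) = ((F (q, p)).1 + intVec d m, (F (q, p)).2)

/-- `S` is a generating function for the lift `F`, i.e. `S(q+m, Q+m) = S(q, Q)` and
`P dQ - p dq = dS(q, Q)`; the latter means `∂₁S(q, Q(q,p)) = -p` and
`∂₂S(q, Q(q,p)) = P(q,p)`. -/
structure IsGenFun (F : Ed d × Ed d → Ed d × Ed d) (S : Ed d × Ed d → ℝ) : Prop where
  periodic : ∀ (m : Fin d → ℤ) (q Q : Ed d), S (q + intVec d m, Q + intVec d m) = S (q, Q)
  dq : ∀ q p v : Ed d, fderiv ℝ (fun q' => S (q', (F (q, p)).1)) q v = -(pairing p v)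
  dQ : ∀ q p v : Ed d, fderiv ℝ (fun Q' => S (q, Q')) (F (q, p)).1 v = pairing (F (q, p)).2 v

/-- `F : ℝ^d × ℝ^d → ℝ^d × ℝ^d` is a lift of a symplectic twist map of `𝕋^d × ℝ^d`
with generating function `S`. -/
structure IsSymplecticTwistLift (F : Ed d × Ed d → Ed d × Ed d)
    (S : Ed d × Ed d → ℝ) : Prop where
  diffeo : IsC1Diffeo F
  lift : IsZdLift F
  twist : IsC1Diffeo (fun x : Ed d × Ed d => (x.1, (F x).1))
  genfun : IsGenFun F S

/-- The mixed second derivative `∂²_{qQ} S (q,Q) (v, v)`. -/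
def mixedS (S : Ed d × Ed d → ℝ) (q Q v : Ed d) : ℝ :=
  fderiv ℝ (fun Q' => fderiv ℝ (fun q' => S (q', Q')) q v) Q v

/-- The symplectic twist map with `C²` generating function `S` is positive. -/
def PositiveGenFun (S : Ed d × Ed d → ℝ) : Prop :=
  ContDiff ℝ 2 S ∧ ∃ α : ℝ, 0 < α ∧ ∀ q Q v : Ed d, mixedS S q Q v ≤ -α * ‖v‖ ^ 2

/-- The symplectic twist map with `C²` generating function `S` is strongly positive. -/
def StronglyPositiveGenFun (S : Ed d × Ed d → ℝ) : Prop :=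
  ContDiff ℝ 2 S ∧ ∃ α β : ℝ, 0 < α ∧ 0 < β ∧
    ∀ q Q v : Ed d, -β * ‖v‖ ^ 2 ≤ mixedS S q Q v ∧ mixedS S q Q v ≤ -α * ‖v‖ ^ 2

/-- The second derivative `∂²_{qq} S (q, Q)` as a continuous bilinear map. -/
def hessqq (S : Ed d × Ed d → ℝ) (q Q : Ed d) : Ed d →L[ℝ] Ed d →L[ℝ] ℝ :=
  fderiv ℝ (fun q' => fderiv ℝ (fun q'' => S (q'', Q)) q') q

/-- The second derivative `∂²_{QQ} S (q, Q)` as a continuous bilinear map. -/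
def hessQQ (S : Ed d × Ed d → ℝ) (q Q : Ed d) : Ed d →L[ℝ] Ed d →L[ℝ] ℝ :=
  fderiv ℝ (fun Q' => fderiv ℝ (fun Q'' => S (q, Q'')) Q') Q

/-- The symplectic twist map with `C²` generating function `S` has bounded rate:
`‖∂²_{qq} S‖_∞ + ‖∂²_{QQ} S‖_∞ < ∞`. -/
def BoundedRateGenFun (S : Ed d × Ed d → ℝ) : Prop :=
  ContDiff ℝ 2 S ∧ ∃ C : ℝ, ∀ q Q : Ed d, ‖hessqq S q Q‖ + ‖hessQQ S q Q‖ ≤ C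

/-- `γ : ℝ^d → ℝ^d` is `ℤ^d`-periodic. -/
def ZdPeriodic (γ : Ed d → Ed d) : Prop :=
  ∀ (m : Fin d → ℤ) (q : Ed d), γ (q + intVec d m) = γ q

/-- A function `G : ℝ^d → ℝ` is `ℤ^d`-periodic, i.e. is a function on `𝕋^d`. -/
def ZdPeriodicFun (G : Ed d → ℝ) : Prop :=
  ∀ (m : Fin d → ℤ) (q : Ed d), G (q + intVec d m) = G q

/-- The graph of `γ` is Lagrangian: `∫₀¹ γ(ν(t))·ν'(t) dt = 0` for every `C¹` loop `ν`. -/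
def IsLagrangianGraph (γ : Ed d → Ed d) : Prop :=
  ∀ ν : ℝ → Ed d, ContDiff ℝ 1 ν → (∀ t : ℝ, ν (t + 1) = ν t) →
    ∫ t in (0:ℝ)..1, pairing (γ (ν t)) (deriv ν t) = 0

/-- The graph of `γ` is an `(m, n)`-periodic graph of `F`: `F^n(q, γ(q)) = (q+m, γ(q))`. -/
def IsPeriodicGraph (F : Ed d × Ed d → Ed d × Ed d) (m : Fin d → ℤ) (n : ℕ)
    (γ : Ed d → Ed d) : Prop :=
  ∀ q : Ed d, F^[n] (q, γ q) = (q + intVec d m, γ q)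

/-- `m ∈ ℤ^d` and `n ∈ ℕ` are coprime. -/
def CoprimeVec (m : Fin d → ℤ) (n : ℕ) : Prop :=
  Nat.gcd (Finset.univ.gcd fun i => (m i).natAbs) n = 1

/-- The graph of `γ`, as a subset of `ℝ^d × ℝ^d`. -/
def graphSet (γ : Ed d → Ed d) : Set (Ed d × Ed d) := {x : Ed d × Ed d | x.2 = γ x.1}

/-- `F` admits a Lipschitz Lagrangian `(m,n)`-periodic graph. -/
def HasLipLagPeriodicGraph (F : Ed d × Ed d → Ed d × Ed d) (m : Fin d → ℤ) (n : ℕ) : Prop :=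
  ∃ γ : Ed d → Ed d, (∃ K : NNReal, LipschitzWith K γ) ∧ ZdPeriodic γ ∧
    IsLagrangianGraph γ ∧ IsPeriodicGraph F m n γ

/-- The symplectic twist map lifted by `F` satisfies the analyticity property: there is a
holomorphic diffeomorphism of `ℂ^d × ℂ^d` extending `F`, satisfying the twist condition
and admitting a holomorphic generating function. -/
def SatisfiesAnalyticityProperty (F : Ed d × Ed d → Ed d × Ed d) : Prop :=
  ∃ Fc : Cd d × Cd d → Cd d × Cd d,
    IsHolDiffeo Fc ∧
    (∀ q p : Ed d, Fc (complexify q, complexify p)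
        = (complexify (F (q, p)).1, complexify (F (q, p)).2)) ∧
    IsHolDiffeo (fun x : Cd d × Cd d => (x.1, (Fc x).1)) ∧
    ∃ Sc : Cd d × Cd d → ℂ, Differentiable ℂ Sc ∧
      (∀ (m : Fin d → ℤ) (q Q : Cd d), Sc (q + intVecC d m, Q + intVecC d m) = Sc (q, Q)) ∧
      (∀ q p v : Cd d, fderiv ℂ (fun q' => Sc (q', (Fc (q, p)).1)) q v = -(pairingC p v)) ∧
      (∀ q p v : Cd d,
        fderiv ℂ (fun Q' => Sc (q, Q')) (Fc (q, p)).1 v = pairingC (Fc (q, p)).2 v)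

/-- `G : 𝕋^d → ℝ` admits a holomorphic extension to `ℂ^d`. -/
def HasHolomorphicExtension (G : Ed d → ℝ) : Prop :=
  ∃ Gc : Cd d → ℂ, Differentiable ℂ Gc ∧ ∀ q : Ed d, Gc (complexify q) = (G q : ℂ)

/-- `F` is the lift of a completely integrable map `f(q,p) = (q + ∇ℓ₀(p), p)` where
`ℓ₀` is `C²` and `∇ℓ₀` is a `C¹` diffeomorphism of `ℝ^d`. -/
def CompletelyIntegrableLift (F : Ed d × Ed d → Ed d × Ed d) : Prop :=
  ∃ (ℓ : Ed d → ℝ) (g : Ed d → Ed d), ContDiff ℝ 2 ℓ ∧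
    (∀ p v : Ed d, fderiv ℝ ℓ p v = pairing (g p) v) ∧
    IsC1Diffeo g ∧ ∀ q p : Ed d, F (q, p) = (q + g p, p)

/-- The `ν`-th Fourier coefficient of a `ℤ^d`-periodic function `G : ℝ^d → ℝ`. -/
def fourierCoeffT (G : Ed d → ℝ) (ν : Fin d → ℤ) : ℂ :=
  ∫ q in {q : Ed d | ∀ i, q i ∈ Set.Icc (0:ℝ) 1},
    (G q : ℂ) * Complex.exp (-(2 * Real.pi * Complex.I) * ∑ i, (ν i : ℂ) * (q i : ℂ))

/-- The sequence `(x_j)_{j ∈ ℤ}` is action-minimizing for the generating function `S`. -/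
def IsMinimizingSeq (S : Ed d × Ed d → ℝ) (x : ℤ → Ed d) : Prop :=
  ∀ (k : ℤ) (N : ℕ) (w : ℕ → Ed d), w 0 = x k → w N = x (k + N) →
    ∑ j ∈ Finset.range N, S (x (k + j), x (k + j + 1)) ≤
      ∑ j ∈ Finset.range N, S (w j, w (j + 1))

/-- `x : ℤ → ℝ^d × ℝ^d` is a full orbit of `F`. -/
def IsFullOrbit (F : Ed d × Ed d → Ed d × Ed d) (x : ℤ → Ed d × Ed d) : Prop :=
  ∀ j : ℤ, x (j + 1) = F (x j)

/-- The orbit of `a` under `F` is action-minimizing (its projection is a minimizing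
sequence). -/
def OrbitMinimizing (F : Ed d × Ed d → Ed d × Ed d) (S : Ed d × Ed d → ℝ)
    (a : Ed d × Ed d) : Prop :=
  ∃ x : ℤ → Ed d × Ed d, x 0 = a ∧ IsFullOrbit F x ∧ IsMinimizingSeq S fun j => (x j).1

/-- The superlinearity condition `S(q,Q)/‖Q-q‖ → ∞` as `‖Q-q‖ → ∞`. -/
def SuperlinearGenFun (S : Ed d × Ed d → ℝ) : Prop :=
  ∀ A : ℝ, ∃ R : ℝ, ∀ q Q : Ed d, R ≤ ‖Q - q‖ → A * ‖Q - q‖ ≤ S (q, Q)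

/-- The determinant of `∂_p (π₁ ∘ F^n) (q, p)`. -/
def twistDet (F : Ed d × Ed d → Ed d × Ed d) (n : ℕ) (q p : Ed d) : ℝ :=
  LinearMap.det ((fderiv ℝ (fun p' => (F^[n] (q, p')).1) p : Ed d →L[ℝ] Ed d)
    : Ed d →ₗ[ℝ] Ed d)

/-- The set `A ⊆ ℝ` is infinite with points accumulating to `0`. -/
def InfiniteAccumulatingAtZero (A : Set ℝ) : Prop :=
  A.Infinite ∧ ∀ δ : ℝ, 0 < δ → ∃ ε ∈ A, ε ≠ 0 ∧ |ε| < δ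

/-! Write `r_i = ⟨ν, q_i⟩ ∈ ℚ`. The rationals `λ` with `λ r_i ∈ ℤ` form the progression
`|r_i|⁻¹ ℤ`, so if it misses `(a_i, b_i)` then `|r_i| ≤ (b_i - a_i)⁻¹`. Hence the injective
linear map `ν ↦ (⟨ν, q_i⟩)_i` sends the set into a fixed box; being anti-Lipschitz, it pulls
that box back to a bounded set, which contains only finitely many lattice points. -/

theorem tendsto_intCast_pi_cofinite_cocompact {ι : Type*} [Finite ι] :
    Tendsto (fun (ν : ι → ℤ) i => (ν i : ℝ)) cofinite (cocompact (ι → ℝ)) := by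
  simpa only [coprodᵢ_cofinite, coprodᵢ_cocompact] using
    Tendsto.pi_map_coprodᵢ fun _ : ι => Int.tendsto_coe_cofinite

theorem finite_of_isBounded_image_intCast {ι : Type*} [Fintype ι] {S : Set (ι → ℤ)}
    (hS : Bornology.IsBounded ((fun ν i => (ν i : ℝ)) '' S)) : S.Finite := by
  have hK : IsCompact (closure ((fun ν i => (ν i : ℝ)) '' S)) := hS.isCompact_closure
  exact (tendsto_cofinite_cocompact_iff.1 tendsto_intCast_pi_cofinite_cocompact _ hK).subset
    fun ν hν => subset_closure (mem_image_of_mem _ hν)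

theorem finite_of_isBounded_image_intCast_of_injective {ι E : Type*} [Fintype ι]
    [NormedAddCommGroup E] [NormedSpace ℝ E] (L : (ι → ℝ) →ₗ[ℝ] E) (hL : Injective L)
    {S : Set (ι → ℤ)} (hS : Bornology.IsBounded ((fun ν => L fun i => (ν i : ℝ)) '' S)) :
    S.Finite := by
  obtain ⟨K, -, hK⟩ := L.injective_iff_antilipschitz.1 hL
  refine finite_of_isBounded_image_intCast ((hK.isBounded_preimage hS).subset ?_)
  rintro _ ⟨ν, hν, rfl⟩
  exact ⟨ν, hν, rfl⟩

theorem exists_rat_mem_Ioo_mul_eq_intCast {a b : ℝ} {r : ℚ} (h : 1 < |(r : ℝ)| * (b - a)) :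
    ∃ l : ℚ, (l : ℝ) ∈ Ioo a b ∧ ∃ k : ℤ, l * r = k := by
  have hr : (0 : ℝ) < |(r : ℝ)| := (abs_nonneg _).lt_of_ne fun h0 => by
    rw [← h0, zero_mul] at h
    exact zero_lt_one.not_gt h
  set k : ℤ := ⌊a * |(r : ℝ)|⌋ + 1
  have hk : a * |(r : ℝ)| < k ∧ (k : ℝ) < b * |(r : ℝ)| := by
    have hfloor := Int.floor_le (a * |(r : ℝ)|)
    constructor <;> push_cast [k] <;> linarith [Int.lt_floor_add_one (a * |(r : ℝ)|)]
  refine ⟨k / |r|, ?_, ?_⟩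
  · push_cast
    exact ⟨(lt_div_iff₀ hr).2 hk.1, (div_lt_iff₀ hr).2 hk.2⟩
  · have hr0 : r ≠ 0 := by rintro rfl; simp at hr
    rcases abs_cases r with ⟨hrabs, -⟩ | ⟨hrabs, -⟩
    · exact ⟨k, by rw [hrabs, div_mul_cancel₀ _ hr0]⟩
    · exact ⟨-k, by rw [hrabs, div_neg, neg_mul, div_mul_cancel₀ _ hr0]; push_cast; ring⟩

theorem abs_le_inv_sub_of_forall_mul_ne_intCast {a b : ℝ} (hab : a < b) {r : ℚ}
    (h : ∀ l : ℚ, a < l → (l : ℝ) < b → ¬∃ k : ℤ, l * r = k) : |(r : ℝ)| ≤ (b - a)⁻¹ := by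
  rw [← one_div, le_div_iff₀ (sub_pos.2 hab)]
  by_contra! hr
  obtain ⟨l, ⟨hal, hlb⟩, hk⟩ := exists_rat_mem_Ioo_mul_eq_intCast hr
  exact h l hal hlb hk

/-- Lemma 3.2 of the paper, arithmetic lemma. Let `q₁, …, q_d ∈ ℚ^d`
be linearly independent over `ℝ`, and `0 < a_i < b_i` for each `i`. Then the set of
`ν ∈ ℤ^d` such that `⟨ν, λ q_i⟩ ∉ ℤ` for every rational `λ ∈ (a_i, b_i)` and every `i`
is finite. -/
theorem statement10 (d : ℕ) (qv : Fin d → Fin d → ℚ)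
    (hqv : LinearIndependent ℝ fun i => fun j => (qv i j : ℝ))
    (a b : Fin d → ℝ) (hab : ∀ i, 0 < a i ∧ a i < b i) :
    {ν : Fin d → ℤ | ∀ (i : Fin d) (l : ℚ), a i < (l : ℝ) → (l : ℝ) < b i →
      ¬ ∃ k : ℤ, ∑ j, (ν j : ℚ) * (l * qv i j) = (k : ℚ)}.Finite := by
  set Q : Matrix (Fin d) (Fin d) ℝ := (Matrix.of qv).map (↑)
  have hQ : Injective Q.mulVec :=
    Matrix.mulVec_injective_iff_isUnit.2 (Matrix.linearIndependent_rows_iff_isUnit.1 hqv)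
  set B : Fin d → ℝ := fun i => (b i - a i)⁻¹
  refine finite_of_isBounded_image_intCast_of_injective Q.mulVecLin hQ
    ((Metric.isBounded_Icc (-B) B).subset ?_)
  rintro _ ⟨ν, hν, rfl⟩
  have hbound : ∀ i, |Q.mulVec (fun j => (ν j : ℝ)) i| ≤ B i := fun i => by
    have hQν : Q.mulVec (fun j => (ν j : ℝ)) i = ((∑ j, (ν j : ℚ) * qv i j : ℚ) : ℝ) := by
      simp [Q, Matrix.mulVec, dotProduct, mul_comm]
    rw [hQν]
    refine abs_le_inv_sub_of_forall_mul_ne_intCast (hab i).2 fun l hal hlb => ?_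
    simpa only [Finset.mul_sum, mul_left_comm] using hν i l hal hlb
  exact ⟨fun i => (abs_le.1 (hbound i)).1, fun i => (abs_le.1 (hbound i)).2⟩

end
end

section
/- Let f be a symplectic twist map of 𝕋^d×ℝ^d with lift F and generating function S, assume f is completely integrable, strongly positive, and satisfies the analyticity property. Let G ∈ C²(𝕋^d) and for ε ∈ ℝ let f_ε be the symplectic twist map with generating function S_ε(q,Q) := S(q,Q) + εG(q), with (F_ε)_{ε∈ℝ} a continuous family of lifts of f_ε. Assume that there exist a basis q₁,…,q_d of ℚ^d and open intervals I₁,…,I_d ⊂ ℝ such that for every rational vector m/n ∈ ⋃_{j=1}^d I_j q_j ∩ ℚ^d (with m ∈ ℤ^d, n ∈ ℕ*, m and n coprime), F_ε has a Lipschitz Lagrangian (m,n)-periodic graph for infinitely many values of ε ∈ ℝ accumulating to 0. Then G is a trigonometric polynomial, i.e. only finitely many Fourier coefficients Ĝ(ν), ν ∈ ℤ^d, are nonzero. -/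
open Function Set Filter Topology MeasureTheory

noncomputable section

variable {d : ℕ}

/-!
Complete integrability together with the generating-function identities forces
`F_ε (q, p) = (q + g (p + ε ∇G q), p + ε ∇G q)` with `g = ∇ℓ₀`, and strong positivity makes `g`
Lipschitz, because `g⁻¹` is strongly monotone. Along the orbit of a point of an `(m, n)`-periodic
graph the momentum returns after `n` steps, so the kicks `ε ∇G(q_k)` sum to zero, while the
positions stay `O(ε)`-close to `q + k m/n`. Letting `ε → 0` gives `∑_{k<n} ∇G(q + k m/n) = 0` for
all `q`; hence `∑_k G(· + k m/n)` is constant, and this kills every coefficient `Ĝ(ν)`, `ν ≠ 0`,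
with `⟨ν, m/n⟩ ∈ ℤ`. When `|⟨ν, q_j⟩| > 1/|I_j|`, the segment `I_j q_j` contains such an `m/n`.
So `Ĝ(ν) ≠ 0` forces `|⟨ν, q_j⟩| ≤ 1/|I_j|` for all `j`, which leaves finitely many `ν` since the
`q_j` form a basis.
-/

open scoped InnerProductSpace Gradient

lemma pairing_eq_inner (p v : Ed d) : pairing p v = ⟪p, v⟫_ℝ := by
  simp [pairing, PiLp.inner_apply, mul_comm]

lemma intVec_apply (m : Fin d → ℤ) (i : Fin d) : intVec d m i = m i := rfl

def unitCube (d : ℕ) : Set (Ed d) := {q : Ed d | ∀ i, q i ∈ Set.Icc (0:ℝ) 1}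

lemma unitCube_eq_preimage : unitCube d = WithLp.ofLp ⁻¹' Set.Icc (0 : Fin d → ℝ) 1 := by
  ext q; simp [unitCube, Set.mem_Icc, Pi.le_def, forall_and]

lemma isCompact_unitCube : IsCompact (unitCube d) := by
  rw [unitCube_eq_preimage]
  exact (PiLp.homeomorph 2 fun _ : Fin d => ℝ).isCompact_preimage.2 isCompact_Icc

lemma exists_add_intVec_mem_unitCube (q : Ed d) : ∃ m, q + intVec d m ∈ unitCube d :=
  ⟨fun i => -⌊q i⌋, fun i => by
    simp only [PiLp.add_apply, intVec_apply, Int.cast_neg, ← sub_eq_add_neg, Set.mem_Icc,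
      sub_nonneg, Int.floor_le, true_and]
    linarith [Int.lt_floor_add_one (q i)]⟩

lemma exists_norm_le_of_periodic {E : Type*} [NormedAddCommGroup E] {f : Ed d → E}
    (hf : Continuous f) (hper : ∀ m q, f (q + intVec d m) = f q) : ∃ M, ∀ q, ‖f q‖ ≤ M := by
  obtain ⟨M, hM⟩ := isCompact_unitCube.exists_bound_of_continuousOn hf.continuousOn
  refine ⟨M, fun q => ?_⟩
  obtain ⟨m, hm⟩ := exists_add_intVec_mem_unitCube q
  simpa [hper] using hM _ hm

abbrev intLattice (d : ℕ) : Submodule ℤ (Ed d) :=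
  Submodule.span ℤ (Set.range (PiLp.basisFun 2 ℝ (Fin d)))

lemma exists_eq_intVec_of_mem_intLattice {x : Ed d} (hx : x ∈ intLattice d) :
    ∃ m, x = intVec d m := by
  rw [Module.Basis.mem_span_iff_repr_mem] at hx
  choose m hm using hx
  exact ⟨m, by ext i; simpa [intVec_apply] using (hm i).symm⟩

lemma unitCube_ae_eq_fundamentalDomain :
    unitCube d =ᵐ[volume] ZSpan.fundamentalDomain (PiLp.basisFun 2 ℝ (Fin d)) := by
  have hfd : ZSpan.fundamentalDomain (PiLp.basisFun 2 ℝ (Fin d))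
      = WithLp.ofLp ⁻¹' Set.pi Set.univ fun _ => Set.Ico (0 : ℝ) 1 := by
    ext q; simp [ZSpan.fundamentalDomain]
  rw [unitCube_eq_preimage, hfd]
  refine (PiLp.volume_preserving_ofLp (Fin d)).quasiMeasurePreserving.preimage_ae_eq ?_
  rw [volume_pi]
  exact Measure.univ_pi_Ico_ae_eq_Icc.symm

lemma setIntegral_unitCube_comp_add {E : Type*} [NormedAddCommGroup E] [NormedSpace ℝ E]
    {ψ : Ed d → E} (hψ : ∀ m q, ψ (q + intVec d m) = ψ q) (a : Ed d) :
    ∫ q in unitCube d, ψ (q + a) = ∫ q in unitCube d, ψ q := by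
  have hlattice : ∀ (l : (intLattice d).toAddSubgroup) (f : Ed d → E),
      (∀ m q, f (q + intVec d m) = f q) → ∀ q, f (l +ᵥ q) = f q := by
    rintro ⟨l, hl⟩ f hf q
    obtain ⟨m, rfl⟩ := exists_eq_intVec_of_mem_intLattice hl
    rw [← hf m q, add_comm]
    rfl
  have : Countable (intLattice d).toAddSubgroup := inferInstanceAs (Countable (intLattice d))
  have hFD := ZSpan.isAddFundamentalDomain' (PiLp.basisFun 2 ℝ (Fin d)) volume
  have hFD' := hFD.preimage_of_equiv (measurePreserving_add_right volume a).quasiMeasurePreserving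
    Function.bijective_id fun l q => add_assoc (l : Ed d) q a
  rw [setIntegral_congr_set unitCube_ae_eq_fundamentalDomain,
    setIntegral_congr_set unitCube_ae_eq_fundamentalDomain,
    ← hFD'.setIntegral_eq hFD (hlattice · _ fun m q => by simp only [add_right_comm, hψ]),
    (measurePreserving_add_right volume a).setIntegral_preimage_emb
      (measurableEmbedding_addRight a)]

def torusChar (ν : Fin d → ℤ) (q : Ed d) : ℂ :=
  Complex.exp (-(2 * Real.pi * Complex.I) * ∑ i, (ν i : ℂ) * (q i : ℂ))

lemma continuous_torusChar (ν : Fin d → ℤ) : Continuous (torusChar ν) := by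
  unfold torusChar; fun_prop

lemma torusChar_add (ν : Fin d → ℤ) (q a : Ed d) :
    torusChar ν (q + a) = torusChar ν q * torusChar ν a := by
  simp only [torusChar, ← Complex.exp_add, PiLp.add_apply, Complex.ofReal_add, mul_add,
    Finset.sum_add_distrib]

lemma torusChar_eq_one {ν : Fin d → ℤ} {a : Ed d} {k : ℤ} (hk : ∑ i, (ν i : ℝ) * a i = k) :
    torusChar ν a = 1 := by
  have hkC : ∑ i, (ν i : ℂ) * (a i : ℂ) = k := by exact_mod_cast congrArg Complex.ofReal hk
  rw [torusChar, hkC, ← Complex.exp_int_mul_two_pi_mul_I (-k)]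
  push_cast; ring_nf

lemma torusChar_add_intVec (ν m : Fin d → ℤ) (q : Ed d) :
    torusChar ν (q + intVec d m) = torusChar ν q := by
  rw [torusChar_add, torusChar_eq_one (a := intVec d m) (k := ∑ i, ν i * m i) (by push_cast; rfl),
    mul_one]

lemma setIntegral_unitCube_torusChar {ν : Fin d → ℤ} (hν : ν ≠ 0) :
    ∫ q in unitCube d, torusChar ν q = 0 := by
  obtain ⟨i, hi⟩ := Function.ne_iff.mp hν
  have hi : (ν i : ℂ) ≠ 0 := by exact_mod_cast hi
  -- translating by half a period in a direction where `ν` is nonzero flips the sign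
  set a : Ed d := EuclideanSpace.single i ((2 * ν i : ℝ)⁻¹)
  have ha : torusChar ν a = -1 := by
    have : ∑ j, (ν j : ℂ) * (a j : ℂ) = 1 / 2 := by
      simp [a, apply_ite, Finset.sum_ite_eq']
      field_simp
    rw [torusChar, this, show -(2 * Real.pi * Complex.I) * (1 / 2) = -(Real.pi * Complex.I) by ring,
      Complex.exp_neg, Complex.exp_pi_mul_I]
    norm_num
  have h := setIntegral_unitCube_comp_add (torusChar_add_intVec ν) a
  simp only [torusChar_add, ha, mul_neg_one, integral_neg] at h
  linear_combination -h / 2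

lemma fourierCoeffT_eq_integral (G : Ed d → ℝ) (ν : Fin d → ℤ) :
    fourierCoeffT G ν = ∫ q in unitCube d, (G q : ℂ) * torusChar ν q := rfl

lemma fourierCoeffT_eq_zero_of_sum_translates_eq_const {G : Ed d → ℝ} (hG : Continuous G)
    (hGper : ZdPeriodicFun G) {ν : Fin d → ℤ} (hν : ν ≠ 0) {ρ : Ed d} {k : ℤ}
    (hρ : ∑ i, (ν i : ℝ) * ρ i = k) {n : ℕ} (hn : n ≠ 0) {C : ℝ}
    (hC : ∀ q, ∑ j ∈ Finset.range n, G (q + (j : ℝ) • ρ) = C) :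
    fourierCoeffT G ν = 0 := by
  have hχ : ∀ (j : ℕ) q, torusChar ν (q + (j : ℝ) • ρ) = torusChar ν q := fun j q => by
    refine (torusChar_add ..).trans ?_
    rw [torusChar_eq_one (a := (j : ℝ) • ρ) (k := j * k), mul_one]
    simp only [PiLp.smul_apply, smul_eq_mul, mul_left_comm _ (j : ℝ), ← Finset.mul_sum, hρ]
    push_cast; rfl
  have hshift (j : ℕ) :
      ∫ q in unitCube d, (G (q + (j : ℝ) • ρ) : ℂ) * torusChar ν q = fourierCoeffT G ν := by
    rw [fourierCoeffT_eq_integral, ← setIntegral_unitCube_comp_add (ψ := fun q => (G q : ℂ) * _)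
      (fun m q => by simp only [hGper m q, torusChar_add_intVec]) ((j : ℝ) • ρ)]
    simp_rw [hχ]
  have hint (j : ℕ) :
      IntegrableOn (fun q => (G (q + (j : ℝ) • ρ) : ℂ) * torusChar ν q) (unitCube d) :=
    (by have := continuous_torusChar ν; fun_prop : Continuous _).continuousOn.integrableOn_compact
      isCompact_unitCube
  have : (n : ℂ) * fourierCoeffT G ν = 0 := calc
    (n : ℂ) * fourierCoeffT G ν
        = ∑ j ∈ Finset.range n, ∫ q in unitCube d, (G (q + (j : ℝ) • ρ) : ℂ) * torusChar ν q := by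
      simp [hshift]
    _ = ∫ q in unitCube d, (C : ℂ) * torusChar ν q := by
      rw [← integral_finsetSum _ fun j _ => hint j]
      congr! 2 with q
      rw [← Finset.sum_mul, ← hC q]
      push_cast; rfl
    _ = 0 := by rw [integral_const_mul, setIntegral_unitCube_torusChar hν, mul_zero]
  simpa [hn] using this

section Gradient

variable {E : Type*} [NormedAddCommGroup E] [InnerProductSpace ℝ E] [CompleteSpace E]

lemma continuous_gradient {G : E → ℝ} (hG : ContDiff ℝ 1 G) : Continuous (∇ G) :=
  (InnerProductSpace.toDual ℝ E).symm.continuous.comp (hG.continuous_fderiv one_ne_zero)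

lemma sum_comp_add_smul_eq_of_sum_gradient_eq_zero {G : E → ℝ} (hG : Differentiable ℝ G)
    {ρ : E} {n : ℕ} (h : ∀ q, ∑ j ∈ Finset.range n, ∇ G (q + (j : ℝ) • ρ) = 0) (q : E) :
    ∑ j ∈ Finset.range n, G (q + (j : ℝ) • ρ) = ∑ j ∈ Finset.range n, G ((j : ℝ) • ρ) := by
  have hH (x : E) : HasFDerivAt (fun q => ∑ j ∈ Finset.range n, G (q + (j : ℝ) • ρ))
      (∑ j ∈ Finset.range n, fderiv ℝ G (x + (j : ℝ) • ρ)) x :=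
    HasFDerivAt.fun_sum fun j _ => (hasFDerivAt_comp_add_right _).2 (hG _).hasFDerivAt
  have hzero (x : E) : ∑ j ∈ Finset.range n, fderiv ℝ G (x + (j : ℝ) • ρ) = 0 := by
    simp_rw [← toDual_gradient, ← map_sum, h x, map_zero]
  simpa using is_const_of_fderiv_eq_zero (fun x => (hH x).differentiableAt)
    (fun x => (hH x).fderiv.trans (hzero x)) q 0

end Gradient

lemma ZdPeriodicFun.gradient_add_intVec {G : Ed d → ℝ} (hG : ZdPeriodicFun G) (m : Fin d → ℤ)
    (q : Ed d) : ∇ G (q + intVec d m) = ∇ G q := by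
  simp only [gradient, ← fderiv_comp_add_right, hG m]

section KickedMap

variable {E : Type*} [NormedAddCommGroup E] [NormedSpace ℝ E]

lemma norm_sum_range_sub_smul_le {w : ℕ → E} {c : E} {η : ℝ} {n : ℕ} (hn : n ≠ 0)
    (hw : ∀ j < n, ‖w j - c‖ ≤ η) {k : ℕ} (hk : k ≤ n) :
    ‖∑ j ∈ Finset.range k, w j - (k : ℝ) • (n : ℝ)⁻¹ • ∑ j ∈ Finset.range n, w j‖ ≤ 2 * k * η := by
  set avg := (n : ℝ)⁻¹ • ∑ j ∈ Finset.range n, w j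
  have havg : ‖c - avg‖ ≤ η := by
    have : c - avg = (n : ℝ)⁻¹ • ∑ j ∈ Finset.range n, (c - w j) := by
      simp [avg, Finset.sum_sub_distrib, smul_sub, ← Nat.cast_smul_eq_nsmul ℝ, smul_smul, hn]
    rw [this, norm_smul, norm_inv, Real.norm_natCast, inv_mul_le_iff₀ (by positivity)]
    calc ‖∑ j ∈ Finset.range n, (c - w j)‖ ≤ ∑ j ∈ Finset.range n, η :=
          norm_sum_le_of_le _ fun j hj => norm_sub_rev c (w j) ▸ hw j (Finset.mem_range.1 hj)
      _ = n * η := by simp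
  calc ‖∑ j ∈ Finset.range k, w j - (k : ℝ) • avg‖
      = ‖∑ j ∈ Finset.range k, ((w j - c) + (c - avg))‖ := by simp [Nat.cast_smul_eq_nsmul]
    _ ≤ ∑ j ∈ Finset.range k, (η + η) := norm_sum_le_of_le _ fun j hj =>
        (norm_add_le _ _).trans (add_le_add (hw j ((Finset.mem_range.1 hj).trans_le hk)) havg)
    _ = 2 * k * η := by simp; ring

def kickMap (g u : E → E) (ε : ℝ) (x : E × E) : E × E :=
  (x.1 + g (x.2 + ε • u x.1), x.2 + ε • u x.1)

variable {g u : E → E} {ε : ℝ}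

lemma iterate_kickMap_snd (x : E × E) (k : ℕ) :
    ((kickMap g u ε)^[k] x).2 = x.2 + ε • ∑ j ∈ Finset.range k, u ((kickMap g u ε)^[j] x).1 := by
  induction k with
  | zero => simp
  | succ k ih =>
    rw [iterate_succ_apply', kickMap, Finset.sum_range_succ, smul_add, ← add_assoc, ← ih]

lemma iterate_kickMap_fst (x : E × E) (k : ℕ) :
    ((kickMap g u ε)^[k] x).1 = x.1 + ∑ j ∈ Finset.range k, g ((kickMap g u ε)^[j + 1] x).2 := by
  induction k with
  | zero => simp
  | succ k ih =>
    rw [iterate_succ_apply', Finset.sum_range_succ, ← add_assoc, ← ih, iterate_succ_apply',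
      kickMap]

lemma sum_kicks_eq_zero_of_iterate_eq (hε : ε ≠ 0) {x : E × E} {n : ℕ} {m : E}
    (hx : (kickMap g u ε)^[n] x = (x.1 + m, x.2)) :
    ∑ j ∈ Finset.range n, u ((kickMap g u ε)^[j] x).1 = 0 := by
  have := iterate_kickMap_snd (g := g) (u := u) (ε := ε) x n
  rw [hx] at this
  simpa [hε] using this

lemma norm_iterate_kickMap_fst_sub_le {M : ℝ} (hu : ∀ q, ‖u q‖ ≤ M) {K : NNReal}
    (hg : LipschitzWith K g) {x : E × E} {n : ℕ} (hn : n ≠ 0) {m : E}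
    (hx : (kickMap g u ε)^[n] x = (x.1 + m, x.2)) {k : ℕ} (hk : k ≤ n) :
    ‖((kickMap g u ε)^[k] x).1 - (x.1 + (k : ℝ) • (n : ℝ)⁻¹ • m)‖ ≤
      2 * k * (K * (n * M * |ε|)) := by
  have hM : 0 ≤ M := (norm_nonneg _).trans (hu 0)
  have hsum : ∑ j ∈ Finset.range n, g ((kickMap g u ε)^[j + 1] x).2 = m := by
    have := iterate_kickMap_fst (g := g) (u := u) (ε := ε) x n
    rw [hx] at this
    exact (add_left_cancel this).symm
  have hp : ∀ j < n, ‖((kickMap g u ε)^[j + 1] x).2 - x.2‖ ≤ n * M * |ε| := fun j hj => by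
    rw [iterate_kickMap_snd, add_sub_cancel_left, norm_smul, Real.norm_eq_abs, mul_comm]
    gcongr
    calc ‖∑ i ∈ Finset.range (j + 1), u ((kickMap g u ε)^[i] x).1‖
        ≤ ∑ i ∈ Finset.range (j + 1), M := norm_sum_le_of_le _ fun i _ => hu _
      _ ≤ n * M := by
        rw [Finset.sum_const, Finset.card_range, nsmul_eq_mul]
        gcongr
        exact_mod_cast hj
  rw [iterate_kickMap_fst, ← hsum, add_sub_add_left_eq_sub]
  exact norm_sum_range_sub_smul_le (c := g x.2) hn
    (fun j hj => (hg.norm_sub_le _ _).trans (by gcongr; exact hp j hj)) hk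

end KickedMap

lemma sum_gradient_translates_eq_zero {E : Type*} [NormedAddCommGroup E] [InnerProductSpace ℝ E]
    [CompleteSpace E] {G : E → ℝ} (hG : ContDiff ℝ 1 G) {M : ℝ} (hM : ∀ q, ‖∇ G q‖ ≤ M)
    {g : E → E} {K : NNReal} (hg : LipschitzWith K g) {n : ℕ} (hn : n ≠ 0) {m : E}
    (hacc : ∀ δ > 0, ∃ ε ≠ 0, |ε| < δ ∧
      ∃ γ : E → E, ∀ q, (kickMap g (∇ G) ε)^[n] (q, γ q) = (q + m, γ q)) (q : E) :
    ∑ j ∈ Finset.range n, ∇ G (q + (j : ℝ) • (n : ℝ)⁻¹ • m) = 0 := by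
  choose ε hε0 hεδ γ hγ using fun N : ℕ => hacc (1 / (N + 1)) Nat.one_div_pos_of_nat
  have hε : Tendsto ε atTop (𝓝 0) :=
    squeeze_zero_norm (fun N => (hεδ N).le) tendsto_one_div_add_atTop_nhds_zero_nat
  have horbit (j : ℕ) (hj : j ∈ Finset.range n) :
      Tendsto (fun N => ((kickMap g (∇ G) (ε N))^[j] (q, γ N q)).1) atTop
        (𝓝 (q + (j : ℝ) • (n : ℝ)⁻¹ • m)) := by
    rw [tendsto_iff_norm_sub_tendsto_zero]
    refine squeeze_zero (fun _ => norm_nonneg _) (fun N =>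
      norm_iterate_kickMap_fst_sub_le hM hg hn (hγ N q) (Finset.mem_range.1 hj).le) ?_
    simpa [mul_assoc] using ((continuous_abs.tendsto 0).comp hε).const_mul (2 * j * (K * (n * M)))
  refine tendsto_nhds_unique (tendsto_finsetSum _ fun j hj =>
    ((continuous_gradient hG).tendsto _).comp (horbit j hj)) ?_
  simp only [Function.comp_def, sum_kicks_eq_zero_of_iterate_eq (hε0 _) (hγ _ q)]
  exact tendsto_const_nhds

section CompletelyIntegrable

variable {F : Ed d × Ed d → Ed d × Ed d} {S : Ed d × Ed d → ℝ} {g ginv : Ed d → Ed d}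

lemma IsGenFun.fderiv_left_eq (hS : IsGenFun F S) (hF : ∀ q p, F (q, p) = (q + g p, p))
    (hg : RightInverse ginv g) (q Q v : Ed d) :
    fderiv ℝ (fun q' => S (q', Q)) q v = -⟪ginv (Q - q), v⟫_ℝ := by
  simpa [hF, hg (Q - q), pairing_eq_inner] using hS.dq q (ginv (Q - q)) v

lemma IsGenFun.fderiv_right_eq (hS : IsGenFun F S) (hF : ∀ q p, F (q, p) = (q + g p, p))
    (hg : RightInverse ginv g) (q Q v : Ed d) :
    fderiv ℝ (fun Q' => S (q, Q')) Q v = ⟪ginv (Q - q), v⟫_ℝ := by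
  simpa [hF, hg (Q - q), pairing_eq_inner] using hS.dQ q (ginv (Q - q)) v

lemma IsGenFun.eq_kickMap {Fε : Ed d × Ed d → Ed d × Ed d} {G : Ed d → ℝ} {ε : ℝ}
    (hFε : IsGenFun Fε fun x => S x + ε * G x.1) (hS : Differentiable ℝ S)
    (hG : Differentiable ℝ G) (hg : RightInverse ginv g)
    (hleft : ∀ q Q v, fderiv ℝ (fun q' => S (q', Q)) q v = -⟪ginv (Q - q), v⟫_ℝ)
    (hright : ∀ q Q v, fderiv ℝ (fun Q' => S (q, Q')) Q v = ⟪ginv (Q - q), v⟫_ℝ) :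
    Fε = kickMap g (∇ G) ε := by
  ext1 ⟨q, p⟩
  set Q := (Fε (q, p)).1
  have hP : ginv (Q - q) = (Fε (q, p)).2 := ext_inner_right ℝ fun v => by
    simpa [fderiv_add_const, hright, pairing_eq_inner] using hFε.dQ q p v
  have hp : ginv (Q - q) = p + ε • ∇ G q := ext_inner_right ℝ fun v => by
    have hSq : DifferentiableAt ℝ (fun q' => S (q', Q)) q := by fun_prop
    have := hFε.dq q p v
    rw [fderiv_fun_add hSq ((hG q).const_mul ε), fderiv_const_mul (hG q)] at this
    simp only [add_apply, smul_apply, hleft, pairing_eq_inner, smul_eq_mul,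
      ← inner_gradient_left] at this
    rw [inner_add_left, real_inner_smul_left]
    linarith
  ext1
  · rw [kickMap, ← hp, hg, add_sub_cancel]
  · rw [kickMap, ← hp, hP]

lemma le_inner_sub_of_mixedS_le (hginv : Differentiable ℝ ginv)
    (hleft : ∀ q Q v, fderiv ℝ (fun q' => S (q', Q)) q v = -⟪ginv (Q - q), v⟫_ℝ) {α : ℝ}
    (hα : ∀ q Q v, mixedS S q Q v ≤ -α * ‖v‖ ^ 2) (x y : Ed d) :
    α * ‖x - y‖ ^ 2 ≤ ⟪ginv x - ginv y, x - y⟫_ℝ := by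
  have hderiv (u v : Ed d) : α * ‖v‖ ^ 2 ≤ ⟪fderiv ℝ ginv u v, v⟫_ℝ := by
    have hfun : (fun Q' => fderiv ℝ (fun q' => S (q', Q')) 0 v)
        = fun Q' => -innerSL ℝ v (ginv Q') := by
      ext Q'; rw [hleft, sub_zero, innerSL_apply_apply, real_inner_comm]
    have hD : HasFDerivAt (fun Q' => -innerSL ℝ v (ginv Q'))
        (-(innerSL ℝ v).comp (fderiv ℝ ginv u)) u :=
      ((innerSL ℝ v).hasFDerivAt.comp u (hginv u).hasFDerivAt).neg
    have hmixed : mixedS S 0 u v = -⟪fderiv ℝ ginv u v, v⟫_ℝ := by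
      rw [mixedS, hfun, hD.fderiv]
      simp [real_inner_comm]
    linarith [hα 0 u v]
  set φ : ℝ → ℝ := fun t => ⟪ginv (y + t • (x - y)), x - y⟫_ℝ
  have hφ (t : ℝ) : HasDerivAt φ ⟪fderiv ℝ ginv (y + t • (x - y)) (x - y), x - y⟫_ℝ t := by
    have hline : HasDerivAt (fun t : ℝ => y + t • (x - y)) (x - y) t := by
      simpa using ((hasDerivAt_id t).smul_const (x - y)).const_add y
    simpa using ((hginv _).hasFDerivAt.comp_hasDerivAt t hline).inner ℝ (hasDerivAt_const t (x - y))
  have hmono := mul_sub_le_image_sub_of_le_deriv (fun t => (hφ t).differentiableAt)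
    (fun t => (hφ t).deriv ▸ hderiv _ _) zero_le_one
  simpa [φ, inner_sub_left] using hmono

lemma lipschitzWith_of_le_inner_sub (hg : LeftInverse ginv g) {α : ℝ} (hα : 0 < α)
    (h : ∀ x y, α * ‖x - y‖ ^ 2 ≤ ⟪ginv x - ginv y, x - y⟫_ℝ) :
    LipschitzWith (Real.toNNReal α⁻¹) g := by
  refine LipschitzWith.of_dist_le_mul fun a b => ?_
  have key : α * ‖g a - g b‖ ^ 2 ≤ ‖a - b‖ * ‖g a - g b‖ := by
    simpa [hg a, hg b] using (h (g a) (g b)).trans (real_inner_le_norm _ _)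
  rw [dist_eq_norm, dist_eq_norm, Real.coe_toNNReal _ (inv_nonneg.2 hα.le), inv_mul_eq_div,
    le_div_iff₀ hα]
  rcases (norm_nonneg (g a - g b)).eq_or_lt with h0 | hpos
  · rw [← h0, zero_mul]; exact norm_nonneg _
  · nlinarith

end CompletelyIntegrable

lemma exists_int_div_mem_Ioo {c a b : ℝ} (h : 1 < |c| * (b - a)) :
    ∃ k : ℤ, (k : ℝ) / c ∈ Set.Ioo a b := by
  rcases lt_trichotomy c 0 with hc | rfl | hc
  · rw [abs_of_neg hc] at h
    refine ⟨⌊c * b⌋ + 1, ?_, ?_⟩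
    · rw [lt_div_iff_of_neg hc]; push_cast; linarith [Int.floor_le (c * b)]
    · rw [div_lt_iff_of_neg hc]; push_cast; linarith [Int.lt_floor_add_one (c * b)]
  · simp at h; linarith
  · rw [abs_of_pos hc] at h
    refine ⟨⌊c * a⌋ + 1, ?_, ?_⟩
    · rw [lt_div_iff₀ hc]; push_cast; linarith [Int.lt_floor_add_one (c * a)]
    · rw [div_lt_iff₀ hc]; push_cast; linarith [Int.floor_le (c * a)]

lemma exists_pos_smul_eq_intCast (w : Fin d → ℚ) :
    ∃ N : ℕ, 0 < N ∧ ∃ m : Fin d → ℤ, ∀ i, (m i : ℚ) = N * w i := by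
  obtain ⟨⟨b, hb⟩, hbw⟩ := IsLocalization.exist_integer_multiples_of_finite (nonZeroDivisors ℤ) w
  choose z hz using hbw
  refine ⟨b.natAbs, Int.natAbs_pos.2 (nonZeroDivisors.ne_zero hb), fun i => b.sign * z i,
    fun i => ?_⟩
  have hzi : (z i : ℚ) = b * w i := by simpa using hz i
  rw [Int.cast_mul, hzi, ← mul_assoc, ← Int.cast_mul, Int.sign_mul_self_eq_natAbs, Int.cast_natCast]

lemma exists_coprimeVec_smul_eq (w : Fin d → ℚ) :
    ∃ (m : Fin d → ℤ) (n : ℕ), 0 < n ∧ CoprimeVec m n ∧ ∀ i, (m i : ℚ) = n * w i := by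
  classical
  have hex := exists_pos_smul_eq_intCast w
  obtain ⟨hN, m, hm⟩ := Nat.find_spec hex
  refine ⟨m, Nat.find hex, hN, ?_, hm⟩
  -- a common factor of `m` and `N` would give a smaller denominator
  by_contra hcop
  set N := Nat.find hex
  set k := Nat.gcd (Finset.univ.gcd fun i => (m i).natAbs) N
  have hkN : k ∣ N := Nat.gcd_dvd_right _ _
  have hkm (i : Fin d) : (k : ℤ) ∣ m i := Int.natCast_dvd.2 <|
    (Nat.gcd_dvd_left _ _).trans (Finset.gcd_dvd (Finset.mem_univ i))
  have hk : 1 < k := lt_of_le_of_ne (Nat.pos_of_ne_zero fun h => by simp_all [k]) (Ne.symm hcop)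
  refine Nat.find_min hex (Nat.div_lt_self hN hk) ⟨Nat.div_pos (Nat.le_of_dvd hN hkN) (by omega),
    fun i => m i / k, fun i => ?_⟩
  have hk0 : (k : ℚ) ≠ 0 := by positivity
  rw [Int.cast_div (hkm i) (by exact_mod_cast hk0), Nat.cast_div hkN hk0, hm, Int.cast_natCast]
  ring

lemma exists_resonant_coprimeVec {w : Fin d → ℚ} {ν : Fin d → ℤ} {a b : ℝ}
    (h : 1 < |∑ i, (ν i : ℝ) * w i| * (b - a)) :
    ∃ (m : Fin d → ℤ) (n : ℕ), 0 < n ∧ CoprimeVec m n ∧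
      (∃ t ∈ Set.Ioo a b, ∀ i, (m i : ℝ) = n * (t * w i)) ∧
      ∃ k : ℤ, ∑ i, (ν i : ℝ) * ((n : ℝ)⁻¹ • intVec d m) i = k := by
  set c := ∑ i, (ν i : ℝ) * w i
  have hc : c ≠ 0 := by rintro hc; simp [hc] at h; linarith
  obtain ⟨k, hk⟩ := exists_int_div_mem_Ioo h
  obtain ⟨m, n, hn, hcop, hm⟩ := exists_coprimeVec_smul_eq fun i => (k / ∑ j, (ν j : ℚ) * w j) * w i
  have hmR (i : Fin d) : (m i : ℝ) = n * ((k / c) * w i) := by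
    simpa [c] using congrArg (Rat.cast : ℚ → ℝ) (hm i)
  refine ⟨m, n, hn, hcop, ⟨k / c, hk, hmR⟩, k, ?_⟩
  have hn0 : (n : ℝ) ≠ 0 := by positivity
  simp only [PiLp.smul_apply, intVec_apply, smul_eq_mul, hmR, inv_mul_cancel_left₀ hn0,
    mul_left_comm _ ((k : ℝ) / c), ← Finset.mul_sum]
  exact div_mul_cancel₀ _ hc

open Matrix in
lemma finite_setOf_forall_abs_sum_le {w : Fin d → Fin d → ℚ} (hw : LinearIndependent ℚ w)
    (K : Fin d → ℝ) :
    {ν : Fin d → ℤ | ∀ j, |∑ i, (ν i : ℝ) * w j i| ≤ K j}.Finite := by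
  set A : Matrix (Fin d) (Fin d) ℝ := (Matrix.of w).map (Rat.cast : ℚ → ℝ)
  have hA : IsUnit A.det := (Matrix.isUnit_iff_isUnit_det A).1 <|
    (Matrix.linearIndependent_rows_iff_isUnit.1 hw).map (Rat.castHom ℝ).mapMatrix
  set R : Fin d → ℝ := fun i => ∑ j, |A⁻¹ i j| * K j
  refine (Set.Finite.pi (t := fun i => Set.Icc (-⌈R i⌉) ⌈R i⌉) fun i => Set.finite_Icc _ _).subset
    fun ν hν i _ => ?_
  have hAν (j : Fin d) : |(A *ᵥ fun i => (ν i : ℝ)) j| ≤ K j := by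
    simpa [A, Matrix.mulVec, dotProduct, mul_comm] using hν j
  have hνR : |(ν i : ℝ)| ≤ R i := by
    have : (fun i => (ν i : ℝ)) = A⁻¹ *ᵥ A *ᵥ fun i => (ν i : ℝ) := by
      rw [Matrix.mulVec_mulVec, Matrix.nonsing_inv_mul A hA, Matrix.one_mulVec]
    rw [congrFun this i, Matrix.mulVec, dotProduct]
    refine (Finset.abs_sum_le_sum_abs _ _).trans (Finset.sum_le_sum fun j _ => ?_)
    rw [abs_mul]
    exact mul_le_mul_of_nonneg_left (hAν j) (abs_nonneg _)
  rw [← Int.cast_abs] at hνR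
  exact abs_le.1 (Int.cast_le.1 (hνR.trans (Int.le_ceil _)))

theorem statement11_general (d : ℕ) (F : Ed d × Ed d → Ed d × Ed d) (S : Ed d × Ed d → ℝ)
    (G : Ed d → ℝ) (hGreg : ContDiff ℝ 2 G) (hGper : ZdPeriodicFun G)
    (Fε : ℝ → Ed d × Ed d → Ed d × Ed d)
    (hFS : IsSymplecticTwistLift F S)
    (hfam : ∀ ε : ℝ, IsSymplecticTwistLift (Fε ε) fun x => S x + ε * G x.1)
    (hint : CompletelyIntegrableLift F)
    (hpos : StronglyPositiveGenFun S)
    (qv : Fin d → Fin d → ℚ) (hqv : LinearIndependent ℚ qv)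
    (a b : Fin d → ℝ) (hab : ∀ j, a j < b j)
    (hiv : ∀ (j : Fin d) (m : Fin d → ℤ) (n : ℕ), 0 < n → CoprimeVec m n →
      (∃ t ∈ Set.Ioo (a j) (b j), ∀ i, (m i : ℝ) = (n : ℝ) * (t * (qv j i : ℝ))) →
      InfiniteAccumulatingAtZero {ε : ℝ | HasLipLagPeriodicGraph (Fε ε) m n}) :
    {ν : Fin d → ℤ | fourierCoeffT G ν ≠ 0}.Finite := by
  obtain ⟨-, g, -, -, ⟨-, ginv, hginv, hgl, hgr⟩, hFg⟩ := hint
  obtain ⟨hS, α, _, hα, _, hmixed⟩ := hpos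
  have hleft := hFS.genfun.fderiv_left_eq hFg hgr
  have hFε (ε : ℝ) : Fε ε = kickMap g (∇ G) ε :=
    (hfam ε).genfun.eq_kickMap (hS.differentiable two_ne_zero)
      (hGreg.differentiable two_ne_zero) hgr hleft (hFS.genfun.fderiv_right_eq hFg hgr)
  have hg := lipschitzWith_of_le_inner_sub hgl hα <| le_inner_sub_of_mixedS_le
    (hginv.differentiable one_ne_zero) hleft fun q Q v => (hmixed q Q v).2
  have hG1 : ContDiff ℝ 1 G := hGreg.of_le one_le_two
  obtain ⟨M, hM⟩ := exists_norm_le_of_periodic (continuous_gradient hG1) hGper.gradient_add_intVec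
  refine (finite_setOf_forall_abs_sum_le hqv fun j => 1 / (b j - a j)).subset fun ν hν j => ?_
  by_contra! hlarge
  rw [div_lt_iff₀ (sub_pos.2 (hab j))] at hlarge
  have hν0 : ν ≠ 0 := by rintro rfl; norm_num at hlarge
  obtain ⟨m, n, hn, hcop, ht, k, hk⟩ := exists_resonant_coprimeVec hlarge
  have hzero := sum_gradient_translates_eq_zero hG1 hM hg hn.ne' fun δ hδ => by
    obtain ⟨ε, ⟨γ, -, -, -, hγ⟩, hε0, hεδ⟩ := (hiv j m n hn hcop ht).2 δ hδ
    exact ⟨ε, hε0, hεδ, γ, hFε ε ▸ hγ⟩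
  exact hν <| fourierCoeffT_eq_zero_of_sum_translates_eq_const hGreg.continuous hGper hν0 hk
    hn.ne' (sum_comp_add_smul_eq_of_sum_gradient_eq_zero (hGreg.differentiable two_ne_zero) hzero)

/-- Proposition 3.3 of the paper. Under the hypotheses of Theorem 2
(complete integrability, strong positivity, analyticity property, and existence of
Lipschitz Lagrangian `(m,n)`-periodic graphs of `F_ε` for infinitely many `ε`
accumulating at `0`, for all rational rotation vectors `m/n` in `⋃_j I_j q_j` for a
basis `q₁, …, q_d` of `ℚ^d` and open intervals `I_j`), the function `G` is a
trigonometric polynomial: only finitely many Fourier coefficients `Ĝ(ν)` are nonzero. -/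
theorem statement11 (d : ℕ) (F : Ed d × Ed d → Ed d × Ed d) (S : Ed d × Ed d → ℝ)
    (G : Ed d → ℝ) (hGreg : ContDiff ℝ 2 G) (hGper : ZdPeriodicFun G)
    (Fε : ℝ → Ed d × Ed d → Ed d × Ed d)
    (hFS : IsSymplecticTwistLift F S)
    (hfam : ∀ ε : ℝ, IsSymplecticTwistLift (Fε ε) fun x => S x + ε * G x.1)
    (hcont : Continuous fun x : ℝ × (Ed d × Ed d) => Fε x.1 x.2)
    (hint : CompletelyIntegrableLift F)
    (hpos : StronglyPositiveGenFun S)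
    (hanal : SatisfiesAnalyticityProperty F)
    (qv : Fin d → Fin d → ℚ) (hqv : LinearIndependent ℚ qv)
    (a b : Fin d → ℝ) (hab : ∀ j, a j < b j)
    (hiv : ∀ (j : Fin d) (m : Fin d → ℤ) (n : ℕ), 0 < n → CoprimeVec m n →
      (∃ t ∈ Set.Ioo (a j) (b j), ∀ i, (m i : ℝ) = (n : ℝ) * (t * (qv j i : ℝ))) →
      InfiniteAccumulatingAtZero {ε : ℝ | HasLipLagPeriodicGraph (Fε ε) m n}) :
    {ν : Fin d → ℤ | fourierCoeffT G ν ≠ 0}.Finite :=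
  statement11_general d F S G hGreg hGper Fε hFS hfam hint hpos qv hqv a b hab hiv
end
end
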